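/- Let $d\ge 2$ and $c>0$. There exists a constant $C>0$ depending only on $d$ and $c$ such that for all $h>0$, all $x_0\in\mathbb{R}^{d-1}$: $\int_{\xi\in B_{ch}(x_0)}\int_{t=-ch}^{ch}\Big(\int_{\eta\in B_{ch}(x_0)}(|\xi-\eta|^2+t^2)^{-(d-1)/2}\,d\eta\Big)^2\,dt\,d\xi \le C\, h^{d}$, where $B_{ch}(x_0)\subset\mathbb{R}^{d-1}$ is the ball of radius $ch$ centered at $x_0$. -/

import Mathlib

/-!
Write `n = d - 1` and `R = c h`. Splitting the kernel as
`(r² + t²)^(-n/2) ≤ r^(-(n - 1/4)) |t|^(-1/4)` bounds the `η`-integral by a constant times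
`R^(1/4) |t|^(-1/4)`, because `r^(-(n - 1/4))` is integrable near `0` in dimension `n`.
After squaring, `|t|^(-1/2)` is integrable on `[-R, R]` with integral of order `R^(1/2)`, and the
`ξ`-ball contributes `R^n`, so the whole integral is of order `R^(n+1) = (c h)^d`.
-/

open MeasureTheory Metric Set Module

theorem preimage_sub_left_ball_zero {E : Type*} [SeminormedAddCommGroup E] (ξ : E) (ρ : ℝ) :
    (ξ - ·) ⁻¹' ball 0 ρ = ball ξ ρ := by
  ext η
  simp [dist_eq_norm, norm_sub_rev]

theorem sq_add_sq_rpow_neg_le {x t s α : ℝ} (hx : 0 < x) (ht : t ≠ 0) (hα : 0 ≤ α)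
    (hαs : α ≤ s) : (x ^ 2 + t ^ 2) ^ (-s / 2) ≤ x ^ (-(s - α)) * |t| ^ (-α) := by
  have sq_rpow_half {y : ℝ} (hy : 0 ≤ y) (p : ℝ) : (y ^ 2) ^ (p / 2) = y ^ p := by
    rw [← Real.rpow_natCast, ← Real.rpow_mul hy]; ring_nf
  have hpos : 0 < x ^ 2 + t ^ 2 := by positivity
  calc (x ^ 2 + t ^ 2) ^ (-s / 2)
      = (x ^ 2 + t ^ 2) ^ (-(s - α) / 2) * (x ^ 2 + t ^ 2) ^ (-α / 2) := by
        rw [← Real.rpow_add hpos]; ring_nf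
    _ ≤ (x ^ 2) ^ (-(s - α) / 2) * (|t| ^ 2) ^ (-α / 2) := by
        rw [sq_abs]
        gcongr ?_ * ?_
        · exact Real.rpow_le_rpow_of_nonpos (by positivity) (by nlinarith) (by linarith)
        · exact Real.rpow_le_rpow_of_nonpos (by positivity) (by nlinarith) (by linarith)
    _ = x ^ (-(s - α)) * |t| ^ (-α) := by
        rw [sq_rpow_half hx.le, sq_rpow_half (abs_nonneg t)]

section HaarMeasure

variable {E : Type*} [NormedAddCommGroup E] [NormedSpace ℝ E] [FiniteDimensional ℝ E]
  [MeasurableSpace E] [BorelSpace E] [Nontrivial E] (μ : Measure E) [μ.IsAddHaarMeasure]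

theorem integrableOn_ball_zero_norm_rpow {s : ℝ} (hs : s < finrank ℝ E) (ρ : ℝ) :
    IntegrableOn (fun x : E ↦ ‖x‖ ^ (-s)) (ball 0 ρ) μ :=
  integrableOn_ball_of_norm_le_rpow (C := 1) finrank_pos hs
    (.of_forall fun x ↦ by simp [abs_of_nonneg (Real.rpow_nonneg (norm_nonneg x) _)])
    (measurable_norm.pow_const _).aestronglyMeasurable

theorem setIntegral_ball_zero_norm_rpow {s ρ : ℝ} (hs : s < finrank ℝ E) (hρ : 0 ≤ ρ) :
    ∫ x in ball (0 : E) ρ, ‖x‖ ^ (-s) ∂μ =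
      finrank ℝ E * μ.real (ball 0 1) * (ρ ^ (finrank ℝ E - s) / (finrank ℝ E - s)) := by
  have hball : ∫ x in ball (0 : E) ρ, ‖x‖ ^ (-s) ∂μ =
      ∫ x, (Iio ρ).indicator (fun r : ℝ ↦ r ^ (-s)) ‖x‖ ∂μ := by
    rw [← integral_indicator measurableSet_ball]
    congr 1 with x
    simp only [indicator, mem_ball_zero_iff, mem_Iio]
  have hradial : ∫ r in Ioi (0 : ℝ), r ^ (finrank ℝ E - 1) • (Iio ρ).indicator (· ^ (-s)) r =
      ∫ r in (0 : ℝ)..ρ, r ^ ((finrank ℝ E : ℝ) - s - 1) := by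
    simp_rw [← indicator_smul_apply (Iio ρ) (fun r : ℝ ↦ r ^ (finrank ℝ E - 1))]
    rw [setIntegral_indicator measurableSet_Iio, Ioi_inter_Iio, intervalIntegral.integral_of_le hρ,
      integral_Ioc_eq_integral_Ioo]
    refine setIntegral_congr_fun measurableSet_Ioo fun r hr ↦ ?_
    rw [smul_eq_mul, ← Real.rpow_natCast, ← Real.rpow_add hr.1, Nat.cast_sub finrank_pos]
    ring_nf
  rw [hball, integral_fun_norm_addHaar, hradial, integral_rpow (Or.inl (by linarith)),
    Real.zero_rpow (by linarith), nsmul_eq_mul, smul_eq_mul]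
  ring_nf

theorem integrableOn_ball_norm_sub_rpow {s : ℝ} (hs : s < finrank ℝ E) (ξ : E) (ρ : ℝ) :
    IntegrableOn (fun η : E ↦ ‖ξ - η‖ ^ (-s)) (ball ξ ρ) μ := by
  rw [← preimage_sub_left_ball_zero ξ ρ]
  exact (μ.measurePreserving_sub_left ξ).integrableOn_comp_preimage (measurableEmbedding_subLeft ξ)
    |>.2 (integrableOn_ball_zero_norm_rpow μ hs ρ)

theorem setIntegral_ball_norm_sub_rpow {s ρ : ℝ} (hs : s < finrank ℝ E) (hρ : 0 ≤ ρ) (ξ : E) :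
    ∫ η in ball ξ ρ, ‖ξ - η‖ ^ (-s) ∂μ =
      finrank ℝ E * μ.real (ball 0 1) * (ρ ^ (finrank ℝ E - s) / (finrank ℝ E - s)) := by
  rw [← setIntegral_ball_zero_norm_rpow μ hs hρ, ← preimage_sub_left_ball_zero ξ ρ]
  exact (μ.measurePreserving_sub_left ξ).setIntegral_preimage_emb (measurableEmbedding_subLeft ξ)
    (fun x ↦ ‖x‖ ^ (-s)) _

theorem setIntegral_Icc_sq_le_of_le_mul_abs_rpow {f : ℝ → ℝ} {K R α : ℝ} (hR : 0 ≤ R)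
    (hα : 2 * α < 1) (hf : ∀ t, t ≠ 0 → 0 ≤ f t ∧ f t ≤ K * |t| ^ (-α)) :
    ∫ t in Icc (-R) R, f t ^ 2 ≤ K ^ 2 * (2 * (R ^ (1 - 2 * α) / (1 - 2 * α))) := by
  have hball : ∫ t in Icc (-R) R, f t ^ 2 = ∫ t in ball (0 : ℝ) R, f t ^ 2 := by
    rw [Real.ball_eq_Ioo, zero_sub, zero_add]
    exact setIntegral_congr_set Ioo_ae_eq_Icc.symm
  have hint := integrableOn_ball_zero_norm_rpow volume (E := ℝ) (s := 2 * α) (by simpa using hα) R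
  have hval := setIntegral_ball_zero_norm_rpow volume (E := ℝ) (s := 2 * α) (by simpa using hα) hR
  rw [finrank_self, Real.volume_real_ball zero_le_one] at hval
  rw [hball]
  calc ∫ t in ball (0 : ℝ) R, f t ^ 2
      ≤ ∫ t in ball (0 : ℝ) R, K ^ 2 * ‖t‖ ^ (-(2 * α)) := by
        refine integral_mono_of_nonneg (.of_forall fun _ ↦ sq_nonneg _) (hint.const_mul _) ?_
        filter_upwards [ae_restrict_of_ae (volume.ae_ne (0 : ℝ))] with t ht
        calc f t ^ 2 ≤ (K * |t| ^ (-α)) ^ 2 := pow_le_pow_left₀ (hf t ht).1 (hf t ht).2 2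
          _ = K ^ 2 * ‖t‖ ^ (-(2 * α)) := by
            rw [mul_pow, ← Real.rpow_natCast (|t| ^ (-α)), ← Real.rpow_mul (abs_nonneg t),
              Real.norm_eq_abs]
            ring_nf
    _ = K ^ 2 * (2 * (R ^ (1 - 2 * α) / (1 - 2 * α))) := by
        rw [integral_const_mul, hval]
        push_cast
        ring

theorem setIntegral_ball_norm_sub_sq_add_sq_rpow_le {α R t : ℝ} (hα : 0 < α)
    (hαn : α ≤ finrank ℝ E) (ht : t ≠ 0) {x0 ξ : E} (hξ : ξ ∈ ball x0 R) :
    ∫ η in ball x0 R, (‖ξ - η‖ ^ 2 + t ^ 2) ^ (-(finrank ℝ E : ℝ) / 2) ∂μ ≤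
      finrank ℝ E * μ.real (ball 0 1) * ((2 * R) ^ α / α) * |t| ^ (-α) := by
  have hR : 0 < R := pos_of_mem_ball hξ
  have hsub : ball x0 R ⊆ ball ξ (2 * R) :=
    ball_subset_ball' (by linarith [mem_ball'.1 hξ])
  have hint := integrableOn_ball_norm_sub_rpow μ (s := finrank ℝ E - α) (by linarith) ξ (2 * R)
  calc ∫ η in ball x0 R, (‖ξ - η‖ ^ 2 + t ^ 2) ^ (-(finrank ℝ E : ℝ) / 2) ∂μ
      ≤ ∫ η in ball x0 R, ‖ξ - η‖ ^ (-(finrank ℝ E - α)) * |t| ^ (-α) ∂μ := by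
        refine integral_mono_of_nonneg (.of_forall fun _ ↦ by positivity)
          ((hint.mono_set hsub).mul_const _) ?_
        filter_upwards [ae_restrict_of_ae (μ.ae_ne ξ)] with η hη
        exact sq_add_sq_rpow_neg_le (norm_pos_iff.2 (sub_ne_zero.2 hη.symm)) ht hα.le hαn
    _ = (∫ η in ball x0 R, ‖ξ - η‖ ^ (-(finrank ℝ E - α)) ∂μ) * |t| ^ (-α) :=
        integral_mul_const _ _
    _ ≤ (∫ η in ball ξ (2 * R), ‖ξ - η‖ ^ (-(finrank ℝ E - α)) ∂μ) * |t| ^ (-α) := by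
        gcongr ?_ * _
        exact setIntegral_mono_set hint (.of_forall fun _ ↦ by positivity) hsub.eventuallyLE
    _ = _ := by
        rw [setIntegral_ball_norm_sub_rpow μ (by linarith) (by positivity) ξ, sub_sub_cancel]

theorem setIntegral_ball_Icc_sq_setIntegral_ball_rpow_le (x0 : E) {R : ℝ} (hR : 0 < R) :
    ∫ ξ in ball x0 R, (∫ t in Icc (-R) R,
        (∫ η in ball x0 R, (‖ξ - η‖ ^ 2 + t ^ 2) ^ (-(finrank ℝ E : ℝ) / 2) ∂μ) ^ 2) ∂μ ≤
      64 * √2 * finrank ℝ E ^ 2 * μ.real (ball 0 1) ^ 3 * R ^ (finrank ℝ E + 1) := by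
  set n := finrank ℝ E
  set V := μ.real (ball (0 : E) 1)
  have hn : (1 / 4 : ℝ) ≤ n := le_trans (by norm_num) (Nat.one_le_cast.2 finrank_pos)
  set K := n * V * ((2 * R) ^ (1 / 4 : ℝ) / (1 / 4))
  have hslice : ∀ ξ ∈ ball x0 R, ∫ t in Icc (-R) R,
      (∫ η in ball x0 R, (‖ξ - η‖ ^ 2 + t ^ 2) ^ (-(n : ℝ) / 2) ∂μ) ^ 2 ≤
        K ^ 2 * (2 * (R ^ (1 - 2 * (1 / 4 : ℝ)) / (1 - 2 * (1 / 4)))) := fun ξ hξ ↦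
    setIntegral_Icc_sq_le_of_le_mul_abs_rpow hR.le (by norm_num) fun t ht ↦
      ⟨integral_nonneg fun _ ↦ by positivity,
        setIntegral_ball_norm_sub_sq_add_sq_rpow_le μ (by norm_num) hn ht hξ⟩
  have hvol : μ.real (ball x0 R) = R ^ n * V := by
    rw [measureReal_def, Measure.addHaar_ball_of_pos μ x0 hR, ENNReal.toReal_mul,
      ENNReal.toReal_ofReal (by positivity), ← measureReal_def]
  have hsqrt : ((2 * R) ^ (1 / 4 : ℝ)) ^ 2 = √2 * √R := by
    rw [← Real.rpow_natCast, ← Real.rpow_mul (by positivity), Real.sqrt_eq_rpow,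
      Real.sqrt_eq_rpow, ← Real.mul_rpow zero_le_two hR.le]
    norm_num
  calc _ ≤ K ^ 2 * (2 * (R ^ (1 - 2 * (1 / 4 : ℝ)) / (1 - 2 * (1 / 4)))) * μ.real (ball x0 R) :=
        (le_abs_self _).trans <| norm_setIntegral_le_of_norm_le_const measure_ball_lt_top
          fun ξ hξ ↦ (Real.norm_of_nonneg (integral_nonneg fun _ ↦ sq_nonneg _)).trans_le
            (hslice ξ hξ)
    _ = 64 * √2 * n ^ 2 * V ^ 3 * R ^ (n + 1) := by
        have hK : K ^ 2 = 16 * n ^ 2 * V ^ 2 * (√2 * √R) := by rw [← hsqrt]; ring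
        rw [hK, hvol, show (1 : ℝ) - 2 * (1 / 4) = 1 / 2 by norm_num, ← Real.sqrt_eq_rpow]
        linear_combination (64 * √2 * n ^ 2 * V ^ 3 * R ^ n) * Real.mul_self_sqrt hR.le

end HaarMeasure

theorem stmt1 (d : ℕ) (hd : 2 ≤ d) (c : ℝ) (hc : 0 < c) :
    ∃ C : ℝ, 0 < C ∧ ∀ h : ℝ, 0 < h → ∀ x0 : EuclideanSpace ℝ (Fin (d - 1)),
      (∫ ξ in Metric.ball x0 (c * h),
        ∫ t in Set.Icc (-(c * h)) (c * h),
          (∫ η in Metric.ball x0 (c * h),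
            (‖ξ - η‖ ^ 2 + t ^ 2) ^ (-((d : ℝ) - 1) / 2)) ^ 2)
      ≤ C * h ^ (d : ℝ) := by
  have : Nonempty (Fin (d - 1)) := ⟨⟨0, by omega⟩⟩
  set n := finrank ℝ (EuclideanSpace ℝ (Fin (d - 1))) with hn_def
  have hdim : n + 1 = d := by rw [hn_def, finrank_euclideanSpace_fin]; omega
  have hexp : -((d : ℝ) - 1) / 2 = -(n : ℝ) / 2 := by rw [← hdim]; push_cast; ring
  have hn : 0 < n := finrank_pos
  have hV : 0 < volume.real (ball (0 : EuclideanSpace ℝ (Fin (d - 1))) 1) :=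
    ENNReal.toReal_pos (measure_ball_pos volume _ one_pos).ne' measure_ball_lt_top.ne
  refine ⟨64 * √2 * n ^ 2 * volume.real (ball (0 : EuclideanSpace ℝ (Fin (d - 1))) 1) ^ 3 * c ^ d,
    by positivity, fun h hh x0 ↦ ?_⟩
  rw [hexp, Real.rpow_natCast]
  refine (setIntegral_ball_Icc_sq_setIntegral_ball_rpow_le volume x0 (by positivity)).trans_eq ?_
  rw [hdim, mul_pow]
  ring
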